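/- Consider on ℝ^d the anchor given by the projection to the tangent bundle, i.e. ρ^i{}_J = (δ^i{}_j, 0), and an arbitrary differentiable totally antisymmetric twist T_{IJK} with components (H_{ijk}, f_{ij}{}^k, Q_i{}^{jk}, R^{ijk}). Then: (i) condition (ca1) holds identically; (ii) condition (ca2) holds if and only if f = Q = R = 0; and (iii) given f = Q = R = 0, condition (ca3) holds if and only if ∂_{[l} H_{ijk]} = 0, i.e. the 3-form H is closed. Thus the projection anchor permits exactly the H-twisted standard Courant algebroid with dH = 0. -/

import Mathlib

open scoped BigOperators

noncomputable section

/-- Doubled index set: `I = 1,…,2d` realized as `Fin d ⊕ Fin d`;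
`Sum.inl i` is the lower (vector) label `i`, `Sum.inr i` the upper (form) label `^i`. -/
abbrev DIdx (d : ℕ) := Fin d ⊕ Fin d

/-- The base space `ℝ^d`. -/
abbrev BSpace (d : ℕ) := Fin d → ℝ

/-- The constant split-signature metric `η = ((0,1_d),(1_d,0))`. -/
def eta {d : ℕ} : DIdx d → DIdx d → ℝ
  | Sum.inl i, Sum.inr j => if i = j then 1 else 0
  | Sum.inr i, Sum.inl j => if i = j then 1 else 0
  | _, _ => 0

/-- Partial derivative `∂_i f (x)` on the base `ℝ^d`. -/
def pdb {d : ℕ} (f : BSpace d → ℝ) (i : Fin d) (x : BSpace d) : ℝ :=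
  fderiv ℝ f x (Pi.single i 1)

/-- Weight-one antisymmetrization over three indices. -/
def asym3 {α : Type*} (G : α → α → α → ℝ) (a b c : α) : ℝ :=
  (1/6) * (G a b c - G a c b + G b c a - G b a c + G c a b - G c b a)

/-- Weight-one antisymmetrization over four indices. -/
def asym4 {α : Type*} (G : α → α → α → α → ℝ) (a b c e : α) : ℝ :=
  (1/24) * ∑ σ : Equiv.Perm (Fin 4),
    ((Equiv.Perm.sign σ : ℤ) : ℝ) *
      G (![a,b,c,e] (σ 0)) (![a,b,c,e] (σ 1)) (![a,b,c,e] (σ 2)) (![a,b,c,e] (σ 3))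

/-- Local Courant algebroid condition (ca1): `η^{IJ} ρ^i{}_I ρ^j{}_J = 0`. -/
def ca1 {d : ℕ} (r : BSpace d → Fin d → DIdx d → ℝ) : Prop :=
  ∀ (x : BSpace d) (i j : Fin d), ∑ I, ∑ J, eta I J * r x i I * r x j J = 0

/-- Local Courant algebroid condition (ca2):
`ρ^i{}_I ∂_i ρ^j{}_J − ρ^i{}_J ∂_i ρ^j{}_I = η^{KL} ρ^j{}_K T_{LIJ}`. -/
def ca2 {d : ℕ} (r : BSpace d → Fin d → DIdx d → ℝ)
    (T : BSpace d → DIdx d → DIdx d → DIdx d → ℝ) : Prop :=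
  ∀ (x : BSpace d) (j : Fin d) (I J : DIdx d),
    ∑ i, (r x i I * pdb (fun y => r y j J) i x - r x i J * pdb (fun y => r y j I) i x)
      = ∑ K, ∑ L, eta K L * r x j K * T x L I J

/-- Local Courant algebroid condition (ca3):
`4 ρ^i{}_{[L} ∂_i T_{IJK]} + 3 η^{MN} T_{M[IJ} T_{KL]N} = 0`. -/
def ca3 {d : ℕ} (r : BSpace d → Fin d → DIdx d → ℝ)
    (T : BSpace d → DIdx d → DIdx d → DIdx d → ℝ) : Prop :=
  ∀ (x : BSpace d) (I J K L : DIdx d),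
    4 * asym4 (fun a b c e => ∑ i, r x i a * pdb (fun y => T y b c e) i x) L I J K
      + 3 * asym4 (fun a b c e => ∑ M, ∑ N, eta M N * T x M a b * T x c e N) I J K L
      = 0

/-- The projection anchor `ρ^i{}_J = (δ^i{}_j, 0)`. -/
def rProj (d : ℕ) : BSpace d → Fin d → DIdx d → ℝ :=
  fun _ i => Sum.elim (fun j => if i = j then (1:ℝ) else 0) (fun _ => (0:ℝ))

/-!
The projection anchor is constant and annihilates every upper index. So the derivative side of
(ca2) vanishes and (ca2) says exactly that `T` vanishes when its first index is upper, which by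
total antisymmetry means `f = Q = R = 0`. Then only `H` survives: `η` pairs an upper with a lower
index, so the quadratic term of (ca3) vanishes, and its derivative term is the antisymmetrized
`∂_l H_{ijk}` on lower indices and zero as soon as one index is upper.
-/

section Asym4

variable {α β : Type*}

lemma asym4_eq_zero_of_forall (G : α → α → α → α → ℝ) (h : ∀ a b c e, G a b c e = 0)
    (a b c e : α) : asym4 G a b c e = 0 := by
  simp [asym4, h]

lemma asym4_comp (F : α → α → α → α → ℝ) (f : β → α) (a b c e : β) :
    asym4 F (f a) (f b) (f c) (f e)
      = asym4 (fun a b c e => F (f a) (f b) (f c) (f e)) a b c e := by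
  have hv : (![f a, f b, f c, f e] : Fin 4 → α) = f ∘ ![a, b, c, e] := by
    ext p; fin_cases p <;> rfl
  simp only [asym4, hv, Function.comp_apply]

/-- Each term evaluates `F` at a permutation of `a, b, c, e`. -/
lemma asym4_eq_zero_of_exists (p : α → Prop) (F : α → α → α → α → ℝ)
    (hF : ∀ a b c e, p a ∨ p b ∨ p c ∨ p e → F a b c e = 0) (a b c e : α)
    (h : p a ∨ p b ∨ p c ∨ p e) : asym4 F a b c e = 0 := by
  rw [asym4, Finset.sum_eq_zero, mul_zero]
  intro σ _
  set v : Fin 4 → α := ![a, b, c, e]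
  obtain ⟨q, hq⟩ : ∃ q, p (v q) := by
    rcases h with h | h | h | h
    exacts [⟨0, h⟩, ⟨1, h⟩, ⟨2, h⟩, ⟨3, h⟩]
  rw [← σ.apply_symm_apply q] at hq
  rw [hF, mul_zero]
  generalize σ.symm q = r at hq
  fin_cases r
  exacts [Or.inl hq, Or.inr (Or.inl hq), Or.inr (Or.inr (Or.inl hq)), Or.inr (Or.inr (Or.inr hq))]

end Asym4

section ProjectionAnchor

variable {d : ℕ}

lemma pdb_const (c : ℝ) (i : Fin d) (x : BSpace d) :
    pdb (fun _ : BSpace d => c) i x = 0 := by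
  simp [pdb]

lemma sum_rProj_mul (x : BSpace d) (I : DIdx d) (g : Fin d → ℝ) :
    ∑ i, rProj d x i I * g i = Sum.elim g (fun _ => 0) I := by
  cases I <;> simp [rProj]

theorem ca1_rProj (d : ℕ) : ca1 (rProj d) := by
  intro x i j
  simp [Fintype.sum_sum_type, eta, rProj]

theorem ca2_rProj_iff (T : BSpace d → DIdx d → DIdx d → DIdx d → ℝ) :
    ca2 (rProj d) T ↔ ∀ (x : BSpace d) (j : Fin d) (I J : DIdx d), T x (Sum.inr j) I J = 0 := by
  have hrhs : ∀ x j (I J : DIdx d),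
      ∑ K, ∑ L, eta K L * rProj d x j K * T x L I J = T x (Sum.inr j) I J := by
    intro x j I J
    simp [Fintype.sum_sum_type, eta, rProj]
  have hlhs : ∀ x i j (J : DIdx d), pdb (fun y => rProj d y j J) i x = 0 :=
    fun _ _ _ _ => pdb_const _ _ _
  simp only [ca2, hrhs, hlhs, mul_zero, sub_zero, Finset.sum_const_zero, eq_comm]

end ProjectionAnchor

section Twist

variable {d : ℕ} {T : BSpace d → DIdx d → DIdx d → DIdx d → ℝ}

theorem forall_inr_eq_zero_iff
    (hT1 : ∀ (x : BSpace d) (I J K : DIdx d), T x I J K = -T x J I K)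
    (hT2 : ∀ (x : BSpace d) (I J K : DIdx d), T x I J K = -T x I K J) :
    (∀ (x : BSpace d) (j : Fin d) (I J : DIdx d), T x (Sum.inr j) I J = 0) ↔
      ((∀ (x : BSpace d) (i j k : Fin d), T x (Sum.inl i) (Sum.inl j) (Sum.inr k) = 0)
        ∧ (∀ (x : BSpace d) (i j k : Fin d), T x (Sum.inl i) (Sum.inr j) (Sum.inr k) = 0)
        ∧ (∀ (x : BSpace d) (i j k : Fin d), T x (Sum.inr i) (Sum.inr j) (Sum.inr k) = 0)) := by
  constructor
  · intro h
    refine ⟨fun x i j k => ?_, fun x i j k => ?_, fun x i j k => h x i _ _⟩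
    · rw [hT2, hT1, h, neg_zero, neg_zero]
    · rw [hT1, h, neg_zero]
  · rintro ⟨hf, hQ, hR⟩ x a (j | j) (k | k)
    · rw [hT1, hT2, hf, neg_zero, neg_zero]
    · rw [hT1, hQ, neg_zero]
    · rw [hT2, hT1, hQ, neg_zero, neg_zero]
    · exact hR x a j k

theorem eq_zero_of_isRight
    (hT1 : ∀ (x : BSpace d) (I J K : DIdx d), T x I J K = -T x J I K)
    (hT2 : ∀ (x : BSpace d) (I J K : DIdx d), T x I J K = -T x I K J)
    (h : ∀ (x : BSpace d) (j : Fin d) (I J : DIdx d), T x (Sum.inr j) I J = 0)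
    (x : BSpace d) (I J K : DIdx d) (hIJK : I.isRight ∨ J.isRight ∨ K.isRight) :
    T x I J K = 0 := by
  rcases hIJK with hI | hJ | hK
  · obtain ⟨a, rfl⟩ := Sum.isRight_iff.mp hI
    exact h x a J K
  · obtain ⟨a, rfl⟩ := Sum.isRight_iff.mp hJ
    rw [hT1, h, neg_zero]
  · obtain ⟨a, rfl⟩ := Sum.isRight_iff.mp hK
    rw [hT2, hT1, h, neg_zero, neg_zero]

lemma sum_eta_mul_eq_zero
    (h : ∀ (x : BSpace d) (I J K : DIdx d), I.isRight ∨ J.isRight ∨ K.isRight → T x I J K = 0)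
    (x : BSpace d) (a b c e : DIdx d) :
    ∑ M, ∑ N, eta M N * T x M a b * T x c e N = 0 := by
  refine Finset.sum_eq_zero fun M _ => Finset.sum_eq_zero fun N _ => ?_
  rcases M with m | m
  · rcases N with n | n
    · simp [eta]
    · rw [h x c e (Sum.inr n) (by simp), mul_zero]
  · rw [h x (Sum.inr m) a b (by simp), mul_zero, zero_mul]

theorem ca3_rProj_iff
    (h : ∀ (x : BSpace d) (I J K : DIdx d), I.isRight ∨ J.isRight ∨ K.isRight → T x I J K = 0) :
    ca3 (rProj d) T ↔
      ∀ (x : BSpace d) (i j k l : Fin d),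
        asym4 (fun a b c e =>
          pdb (fun y => T y (Sum.inl b) (Sum.inl c) (Sum.inl e)) a x) l i j k = 0 := by
  have hquad : ∀ x (I J K L : DIdx d),
      asym4 (fun a b c e => ∑ M, ∑ N, eta M N * T x M a b * T x c e N) I J K L = 0 :=
    fun x => asym4_eq_zero_of_forall _ (sum_eta_mul_eq_zero h x)
  have hlower : ∀ x (l i j k : Fin d),
      asym4 (fun a b c e => ∑ i, rProj d x i a * pdb (fun y => T y b c e) i x)
          (Sum.inl l) (Sum.inl i) (Sum.inl j) (Sum.inl k)
        = asym4 (fun a b c e =>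
            pdb (fun y => T y (Sum.inl b) (Sum.inl c) (Sum.inl e)) a x) l i j k := by
    intro x l i j k
    rw [asym4_comp]
    simp only [sum_rProj_mul, Sum.elim_inl]
  have hupper : ∀ x (a b c e : DIdx d), a.isRight ∨ b.isRight ∨ c.isRight ∨ e.isRight →
      ∑ i, rProj d x i a * pdb (fun y => T y b c e) i x = 0 := by
    rintro x a b c e (ha | hbce)
    · obtain ⟨m, rfl⟩ := Sum.isRight_iff.mp ha
      simp [sum_rProj_mul]
    · have hT0 : (fun y => T y b c e) = fun _ => 0 := funext fun y => h y b c e hbce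
      simp [hT0, pdb_const]
  simp only [ca3, hquad, mul_zero, add_zero, mul_eq_zero, four_ne_zero, false_or]
  constructor
  · intro h3 x i j k l
    rw [← hlower]
    exact h3 x _ _ _ _
  · intro hH x I J K L
    by_cases hup : L.isRight ∨ I.isRight ∨ J.isRight ∨ K.isRight
    · exact asym4_eq_zero_of_exists _ _ (hupper x) _ _ _ _ hup
    · simp only [not_or, Bool.not_eq_true, Sum.isRight_eq_false, Sum.isLeft_iff] at hup
      obtain ⟨⟨l, rfl⟩, ⟨i, rfl⟩, ⟨j, rfl⟩, ⟨k, rfl⟩⟩ := hup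
      rw [hlower]
      exact hH x i j k l

end Twist

theorem statement17_general {d : ℕ} (T : BSpace d → DIdx d → DIdx d → DIdx d → ℝ)
    (hT1 : ∀ (x : BSpace d) (I J K : DIdx d), T x I J K = -T x J I K)
    (hT2 : ∀ (x : BSpace d) (I J K : DIdx d), T x I J K = -T x I K J) :
    ca1 (rProj d)
    ∧ (ca2 (rProj d) T ↔
        ((∀ (x : BSpace d) (i j k : Fin d), T x (Sum.inl i) (Sum.inl j) (Sum.inr k) = 0)
          ∧ (∀ (x : BSpace d) (i j k : Fin d), T x (Sum.inl i) (Sum.inr j) (Sum.inr k) = 0)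
          ∧ (∀ (x : BSpace d) (i j k : Fin d), T x (Sum.inr i) (Sum.inr j) (Sum.inr k) = 0)))
    ∧ (((∀ (x : BSpace d) (i j k : Fin d), T x (Sum.inl i) (Sum.inl j) (Sum.inr k) = 0)
          ∧ (∀ (x : BSpace d) (i j k : Fin d), T x (Sum.inl i) (Sum.inr j) (Sum.inr k) = 0)
          ∧ (∀ (x : BSpace d) (i j k : Fin d), T x (Sum.inr i) (Sum.inr j) (Sum.inr k) = 0)) →
        (ca3 (rProj d) T ↔
          ∀ (x : BSpace d) (i j k l : Fin d),
            asym4 (fun a b c e =>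
              pdb (fun y => T y (Sum.inl b) (Sum.inl c) (Sum.inl e)) a x) l i j k = 0)) := by
  refine ⟨ca1_rProj d, (ca2_rProj_iff T).trans (forall_inr_eq_zero_iff hT1 hT2), fun hfQR => ?_⟩
  exact ca3_rProj_iff (eq_zero_of_isRight hT1 hT2 ((forall_inr_eq_zero_iff hT1 hT2).mpr hfQR))

/-- For the projection anchor: (i) (ca1) holds identically; (ii) (ca2)
holds iff `f = Q = R = 0`; (iii) given `f = Q = R = 0`, (ca3) holds iff
`∂_{[l} H_{ijk]} = 0`, i.e. `H` is closed.  Thus the projection anchor permits exactly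
the `H`-twisted standard Courant algebroid with `dH = 0`. -/
theorem statement17 {d : ℕ} (T : BSpace d → DIdx d → DIdx d → DIdx d → ℝ)
    (hTd : ∀ I J K : DIdx d, Differentiable ℝ fun x => T x I J K)
    (hT1 : ∀ (x : BSpace d) (I J K : DIdx d), T x I J K = -T x J I K)
    (hT2 : ∀ (x : BSpace d) (I J K : DIdx d), T x I J K = -T x I K J) :
    ca1 (rProj d)
    ∧ (ca2 (rProj d) T ↔
        ((∀ (x : BSpace d) (i j k : Fin d), T x (Sum.inl i) (Sum.inl j) (Sum.inr k) = 0)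
          ∧ (∀ (x : BSpace d) (i j k : Fin d), T x (Sum.inl i) (Sum.inr j) (Sum.inr k) = 0)
          ∧ (∀ (x : BSpace d) (i j k : Fin d), T x (Sum.inr i) (Sum.inr j) (Sum.inr k) = 0)))
    ∧ (((∀ (x : BSpace d) (i j k : Fin d), T x (Sum.inl i) (Sum.inl j) (Sum.inr k) = 0)
          ∧ (∀ (x : BSpace d) (i j k : Fin d), T x (Sum.inl i) (Sum.inr j) (Sum.inr k) = 0)
          ∧ (∀ (x : BSpace d) (i j k : Fin d), T x (Sum.inr i) (Sum.inr j) (Sum.inr k) = 0)) →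
        (ca3 (rProj d) T ↔
          ∀ (x : BSpace d) (i j k l : Fin d),
            asym4 (fun a b c e =>
              pdb (fun y => T y (Sum.inl b) (Sum.inl c) (Sum.inl e)) a x) l i j k = 0)) :=
  statement17_general T hT1 hT2
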